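/- arXiv:1407.7346 — 2 statements merged into one kernel-verified Lean document; each statement's English description precedes it below -/
import Mathlib

section
/- If H is a Hadamard matrix of order n with n > 2, then n is divisible by 4. -/
/-- A Hadamard matrix of order `n`. -/
def IsHadamard {n : ℕ} (H : Matrix (Fin n) (Fin n) ℝ) : Prop :=
  (∀ i j, H i j = 1 ∨ H i j = -1) ∧ H * H.transpose = (n : ℝ) • 1

theorem hadamard_four_dvd_order {n : ℕ} (H : Matrix (Fin n) (Fin n) ℝ)
    (hH : IsHadamard H) (hn : 2 < n) : 4 ∣ n := by
  obtain ⟨hpm, horth⟩ := hH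
  have orth : ∀ i k : Fin n, i ≠ k → ∑ j, H i j * H k j = 0 := by
    intro i k hik
    have h := congrFun (congrFun horth i) k
    simpa [Matrix.mul_apply, Matrix.transpose_apply, Matrix.one_apply, hik] using h
  set i0 : Fin n := ⟨0, by omega⟩ with hi0
  set i1 : Fin n := ⟨1, by omega⟩ with hi1
  set i2 : Fin n := ⟨2, by omega⟩ with hi2
  have h10 : i1 ≠ i0 := by simp [hi0, hi1, Fin.ext_iff]
  have h20 : i2 ≠ i0 := by simp [hi0, hi2, Fin.ext_iff]
  have h12 : i1 ≠ i2 := by simp [hi1, hi2, Fin.ext_iff]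
  have sq : ∀ j, H i0 j * H i0 j = 1 := fun j => by
    rcases hpm i0 j with h | h <;> rw [h] <;> norm_num
  have key : ∑ j, (1 + H i1 j * H i0 j) * (1 + H i2 j * H i0 j) = (n : ℝ) := by
    have expand : ∀ j : Fin n, (1 + H i1 j * H i0 j) * (1 + H i2 j * H i0 j)
        = 1 + H i1 j * H i0 j + H i2 j * H i0 j + H i1 j * H i2 j := by
      intro j
      linear_combination (H i1 j * H i2 j) * (sq j)
    simp_rw [expand]
    rw [Finset.sum_add_distrib, Finset.sum_add_distrib, Finset.sum_add_distrib,
      orth i1 i0 h10, orth i2 i0 h20, orth i1 i2 h12]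
    simp
  set m := (Finset.univ.filter (fun j => H i1 j = H i0 j ∧ H i2 j = H i0 j)).card with hm
  have hf : ∀ j : Fin n, (1 + H i1 j * H i0 j) * (1 + H i2 j * H i0 j)
      = 4 * (if H i1 j = H i0 j ∧ H i2 j = H i0 j then (1:ℝ) else 0) := by
    intro j
    rcases hpm i0 j with h0 | h0 <;> rcases hpm i1 j with h1 | h1 <;>
      rcases hpm i2 j with h2 | h2 <;> simp [h0, h1, h2] <;> norm_num
  have hcast : (n : ℝ) = 4 * (m : ℝ) := by
    rw [← key]
    simp_rw [hf]
    rw [← Finset.mul_sum, Finset.sum_boole, hm]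
  exact ⟨m, by exact_mod_cast hcast⟩
end

section
/- Let (X,S) be a commutative association scheme on a finite set X and let s₀, s₁ ∈ S be non-identity relations with adjacency matrices A_{s₀}, A_{s₁} and intersection numbers c^s_{s₀s₁}. Define on X̃ = X × F₂ × F₂ the lifted relation s̃ = {((x,a,b),(y,a',c)) : (x,y) ∈ s, a = a'} for s ∈ S \ {1_X}, with adjacency matrix A_{s̃}, and let t̃ = {((x,a,b),(x,a,b+1))}. Then A_{s̃₀}·A_{s̃₁} = Σ_{s ∈ S∖{1_X}} 2·c^s_{s₀s₁}·A_{s̃} + 2·c^{1_X}_{s₀s₁}·(I + A_{t̃}). -/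
open Classical in
/-- Adjacency matrix of the lift `s̃` of a relation `s ⊆ X × X` to `X × F₂ × F₂`:
`((x,a,b),(y,a',c)) ∈ s̃` iff `a = a'` and `(x,y) ∈ s`. -/
noncomputable def liftAdj {X : Type*} (s : Set (X × X)) :
    Matrix (X × ZMod 2 × ZMod 2) (X × ZMod 2 × ZMod 2) ℤ :=
  fun v w => if v.2.1 = w.2.1 ∧ (v.1, w.1) ∈ s then 1 else 0

open Classical in
/-- Adjacency matrix of the relation `t̃ = {((x,a,b),(x,a,b+1))}` on `X × F₂ × F₂`. -/
noncomputable def tAdj (X : Type*) :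
    Matrix (X × ZMod 2 × ZMod 2) (X × ZMod 2 × ZMod 2) ℤ :=
  fun v w => if v.1 = w.1 ∧ v.2.1 = w.2.1 ∧ v.2.2 = w.2.2 + 1 then 1 else 0

open Classical in
theorem lifted_adjacency_product {X : Type*} [Fintype X] [DecidableEq X]
    (R : Finset (Set (X × X)))
    (hpart : ∀ p : X × X, ∃! s, s ∈ R ∧ p ∈ s)
    (hid : {p : X × X | p.1 = p.2} ∈ R)
    (hsymm : ∀ s ∈ R, {p : X × X | Prod.swap p ∈ s} ∈ R)
    (c : Set (X × X) → Set (X × X) → Set (X × X) → ℕ)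
    (hc : ∀ s ∈ R, ∀ t ∈ R, ∀ u ∈ R, ∀ p : X × X, p ∈ u →
      Set.ncard {z : X | (p.1, z) ∈ s ∧ (z, p.2) ∈ t} = c s t u)
    (hcomm : ∀ s ∈ R, ∀ t ∈ R, ∀ u ∈ R, c s t u = c t s u)
    (s₀ s₁ : Set (X × X)) (hs₀ : s₀ ∈ R) (hs₁ : s₁ ∈ R)
    (hs₀ne : s₀ ≠ {p : X × X | p.1 = p.2}) (hs₁ne : s₁ ≠ {p : X × X | p.1 = p.2}) :
    liftAdj s₀ * liftAdj s₁ =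
      (∑ s ∈ R.erase {p : X × X | p.1 = p.2}, (2 * c s₀ s₁ s : ℤ) • liftAdj s) +
        (2 * c s₀ s₁ {p : X × X | p.1 = p.2} : ℤ) • (1 + tAdj X) := by
  ext ⟨x, a, b⟩ ⟨y, a', c'⟩
  obtain ⟨u, ⟨huR, hxyu⟩, huniq⟩ := hpart (x, y)
  have hsum : (∑ z : X, (if (x, z) ∈ s₀ ∧ (z, y) ∈ s₁ then (1:ℤ) else 0))
      = (c s₀ s₁ u : ℤ) := by
    rw [Finset.sum_boole]
    have h := hc s₀ hs₀ s₁ hs₁ u huR (x, y) hxyu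
    rw [← h, Set.ncard_eq_toFinset_card']
    congr 1
    simp [Set.toFinset_setOf]
  have hLHS : (liftAdj s₀ * liftAdj s₁) (x, a, b) (y, a', c')
      = if a = a' then 2 * (c s₀ s₁ u : ℤ) else 0 := by
    rw [Matrix.mul_apply, Fintype.sum_prod_type]
    simp only [liftAdj, Fintype.sum_prod_type]
    by_cases h : a = a'
    · subst h
      rw [if_pos rfl]
      have key : ∀ z : X, (∑ α : ZMod 2, ∑ β : ZMod 2,
          (if a = α ∧ (x, z) ∈ s₀ then (1:ℤ) else 0) *
            (if α = a ∧ (z, y) ∈ s₁ then (1:ℤ) else 0))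
          = 2 * (if (x, z) ∈ s₀ ∧ (z, y) ∈ s₁ then (1:ℤ) else 0) := by
        intro z
        rw [show ((Finset.univ : Finset (ZMod 2)) = {0, 1}) from by decide]
        have ha : a = 0 ∨ a = 1 := by revert a; decide
        by_cases h0 : (x, z) ∈ s₀ <;> by_cases h1 : (z, y) ∈ s₁ <;>
          rcases ha with ha | ha <;> subst ha <;>
          simp [h0, h1, (by decide : (0:ZMod 2) ≠ 1), (by decide : (1:ZMod 2) ≠ 0)] <;>
          ring
      rw [Finset.sum_congr rfl fun z _ => key z, ← Finset.mul_sum, hsum]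
    · rw [if_neg h]
      apply Finset.sum_eq_zero; intro z _
      apply Finset.sum_eq_zero; intro α _
      apply Finset.sum_eq_zero; intro β _
      by_cases hα : a = α
      · subst hα; simp [h]
      · simp [hα]
  rw [hLHS]
  simp only [Matrix.add_apply, Matrix.sum_apply, Matrix.smul_apply, Matrix.one_apply,
    smul_eq_mul, liftAdj, tAdj]
  by_cases hxy : x = y
  · subst hxy
    have hu : ({p : X × X | p.1 = p.2} : Set (X × X)) = u :=
      huniq _ ⟨hid, by simp⟩
    rw [← hu, Finset.sum_eq_zero]
    · simp only [zero_add, Prod.mk.injEq, true_and]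
      by_cases ha : a = a'
      · subst ha
        rw [if_pos rfl]
        by_cases hb : b = c'
        · have h2 : ¬ b = c' + 1 := (by decide : ∀ u v : ZMod 2, u = v → ¬ u = v + 1) b c' hb
          simp [hb, h2]
        · have h2 : b = c' + 1 := (by decide : ∀ u v : ZMod 2, ¬ u = v → u = v + 1) b c' hb
          simp [hb, h2]
      · simp [ha]
    · intro s hs
      have hne : s ≠ {p : X × X | p.1 = p.2} := Finset.ne_of_mem_erase hs
      have hnm : ((x : X), x) ∉ s := fun h =>
        hne ((huniq s ⟨Finset.mem_of_mem_erase hs, h⟩).trans hu.symm)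
      simp [hnm]
  · have huid : u ≠ {p : X × X | p.1 = p.2} := fun h => hxy (by
      rw [h] at hxyu; exact hxyu)
    have hmem : u ∈ R.erase {p : X × X | p.1 = p.2} := Finset.mem_erase.mpr ⟨huid, huR⟩
    rw [Finset.sum_eq_single_of_mem u hmem]
    · have h1 : ¬ ((x, a, b) : X × ZMod 2 × ZMod 2) = (y, a', c') := by
        simp [hxy]
      simp only [h1, if_false, hxy, false_and, if_false, add_zero, mul_zero, add_zero]
      by_cases ha : a = a' <;> simp [ha, hxyu] <;> ring
    · intro s hs hsne
      have hnm : ((x : X), y) ∉ s := fun h =>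
        hsne (huniq s ⟨Finset.mem_of_mem_erase hs, h⟩)
      simp [hnm]
end
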